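/- arXiv:2310.18919 — 5 statements merged into one kernel-verified Lean document; each statement's English description precedes it below -/
import Mathlib

section
/- Let d and K be positive integers, let λ ≥ 1 be a real number, let φ₁, …, φ_K ∈ ℝ^d with ‖φ_t‖ ≤ 1 for all t, and let τ₁, …, τ_K be nonnegative integers (the delays). For each k ∈ {1,…,K} define the d×d matrices Σ^k = λI + Σ_{t=1}^{k−1} φ_t φ_tᵀ, Ω^k = λI + Σ_{t=1}^{k−1} 𝟙[t + τ_t ≤ k−1] φ_t φ_tᵀ, Λ^k = Σ_{t=1}^{k−1} 𝟙[t + τ_t > k−1] φ_t φ_tᵀ, and the count U_k = Σ_{s=1}^{k} 𝟙[s + τ_s > k]. Then Σ_{k=1}^{K} √(φ_kᵀ (Σ^k)⁻¹ Λ^k (Ω^k)⁻¹ φ_k) ≤ ((1 + max_{k∈[K]} U_k)/2) · Σ_{k=1}^{K} φ_kᵀ (Σ^k)⁻¹ φ_k + Σ_{t=1}^{K−1} τ_t · φ_tᵀ (Σ^t)⁻¹ φ_t. -/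
open Matrix Finset

/-!
Split `Σ^k = Ω^k + Λ^k`, where `Λ^k` is the sum of the `U_{k-1}` rank-one terms `φ_t φ_tᵀ` whose
feedback is still pending. Since `φ_t φ_tᵀ ≤ I ≤ Ω^k`, we get `Σ^k ≤ (1 + U_{k-1}) Ω^k`, hence
`(Ω^k)⁻¹ ≤ (1 + U_{k-1}) (Σ^k)⁻¹`. Cauchy–Schwarz in the forms of `(Σ^k)⁻¹` and `(Ω^k)⁻¹` then
bounds each summand `(φ_kᵀ (Σ^k)⁻¹ φ_t) (φ_tᵀ (Ω^k)⁻¹ φ_k)` of the cross term by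
`(1 + U_{k-1}) ‖φ_k‖²_{(Σ^k)⁻¹} ‖φ_t‖²_{(Σ^k)⁻¹}`, and `‖φ_t‖²_{(Σ^k)⁻¹} ≤ ‖φ_t‖²_{(Σ^t)⁻¹}`.
AM–GM splits the square root into `(1 + U_{k-1})/2 · ‖φ_k‖²_{(Σ^k)⁻¹}` plus half the sum of
`‖φ_t‖²_{(Σ^t)⁻¹}` over the pending `t`; after exchanging the order of summation, each episode
`t` is pending during at most `τ_t` episodes.
-/

namespace Matrix

variable {n ι : Type*} {ψ : ι → n → ℝ} {s : Finset ι}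

def outerSum (ψ : ι → n → ℝ) (s : Finset ι) : Matrix n n ℝ := ∑ t ∈ s, vecMulVec (ψ t) (ψ t)

lemma outerSum_filter (ψ : ι → n → ℝ) (s : Finset ι) (p : ι → Prop) [DecidablePred p] :
    outerSum ψ (s.filter p) = ∑ t ∈ s, (if p t then (1 : ℝ) else 0) • vecMulVec (ψ t) (ψ t) := by
  simp only [outerSum, sum_filter, ite_smul, one_smul, zero_smul]

section

variable [Fintype n]

lemma IsHermitian.dotProduct_mulVec_comm {M : Matrix n n ℝ} (hM : M.IsHermitian) (x y : n → ℝ) :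
    y ⬝ᵥ M *ᵥ x = x ⬝ᵥ M *ᵥ y := by
  rw [dotProduct_mulVec, ← mulVec_transpose, dotProduct_comm,
    ← conjTranspose_eq_transpose_of_trivial, hM.eq]

lemma PosSemidef.dotProduct_mulVec_self_nonneg {M : Matrix n n ℝ} (hM : M.PosSemidef)
    (x : n → ℝ) : 0 ≤ x ⬝ᵥ M *ᵥ x := by
  simpa using hM.dotProduct_mulVec_nonneg x

lemma dotProduct_outerSum_mulVec (x y : n → ℝ) :
    x ⬝ᵥ outerSum ψ s *ᵥ y = ∑ t ∈ s, (x ⬝ᵥ ψ t) * (ψ t ⬝ᵥ y) := by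
  simp only [outerSum, sum_mulVec, dotProduct_sum, vecMulVec_mulVec, op_smul_eq_smul,
    dotProduct_smul, smul_eq_mul, mul_comm]

lemma dotProduct_mul_outerSum_mul_mulVec (A B : Matrix n n ℝ) (x y : n → ℝ) :
    x ⬝ᵥ (A * outerSum ψ s * B) *ᵥ y = ∑ t ∈ s, (x ⬝ᵥ A *ᵥ ψ t) * (ψ t ⬝ᵥ B *ᵥ y) := by
  simp only [← mulVec_mulVec, dotProduct_mulVec x A, dotProduct_outerSum_mulVec]

lemma posSemidef_outerSum : (outerSum ψ s).PosSemidef :=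
  posSemidef_sum s fun t _ => by simpa using posSemidef_vecMulVec_self_star (ψ t)

lemma dotProduct_outerSum_mulVec_mono {s' : Finset ι} (hs : s ⊆ s') (x : n → ℝ) :
    x ⬝ᵥ outerSum ψ s *ᵥ x ≤ x ⬝ᵥ outerSum ψ s' *ᵥ x := by
  simp only [dotProduct_outerSum_mulVec]
  exact sum_le_sum_of_subset_of_nonneg hs fun t _ _ => by
    rw [dotProduct_comm (ψ t)]; exact mul_self_nonneg _

variable [DecidableEq n]

lemma PosSemidef.dotProduct_mulVec_sq_le {M : Matrix n n ℝ} (hM : M.PosSemidef) (x y : n → ℝ) :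
    (x ⬝ᵥ M *ᵥ y) ^ 2 ≤ (x ⬝ᵥ M *ᵥ x) * (y ⬝ᵥ M *ᵥ y) := by
  have h := LinearMap.BilinForm.apply_mul_apply_le_of_forall_zero_le (toLinearMap₂' ℝ M)
    (fun z => by simpa [toLinearMap₂'_apply'] using hM.dotProduct_mulVec_self_nonneg z) x y
  simpa only [toLinearMap₂'_apply', hM.isHermitian.dotProduct_mulVec_comm y x, ← sq] using h

lemma PosDef.dotProduct_inv_mulVec_le {A B : Matrix n n ℝ} (hA : A.PosDef) (hB : B.PosDef)
    {c : ℝ} (hc : 0 ≤ c) (hAB : ∀ y, y ⬝ᵥ A *ᵥ y ≤ c * (y ⬝ᵥ B *ᵥ y)) (x : n → ℝ) :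
    x ⬝ᵥ B⁻¹ *ᵥ x ≤ c * (x ⬝ᵥ A⁻¹ *ᵥ x) := by
  have inv_mulVec_mulVec {M : Matrix n n ℝ} (hM : M.PosDef) (v : n → ℝ) :
      M⁻¹ *ᵥ (M *ᵥ v) = v := by
    rw [mulVec_mulVec, nonsing_inv_mul _ ((isUnit_iff_isUnit_det _).mp hM.isUnit), one_mulVec]
  obtain ⟨y, rfl⟩ : ∃ y, B *ᵥ y = x := ⟨B⁻¹ *ᵥ x, by
    rw [mulVec_mulVec, mul_nonsing_inv _ ((isUnit_iff_isUnit_det _).mp hB.isUnit), one_mulVec]⟩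
  -- Cauchy–Schwarz for the form of `A⁻¹` at `A y` and `B y`
  have hcs := hA.inv.posSemidef.dotProduct_mulVec_sq_le (A *ᵥ y) (B *ᵥ y)
  rw [hA.inv.isHermitian.dotProduct_mulVec_comm, inv_mulVec_mulVec hA, dotProduct_comm (A *ᵥ y),
    dotProduct_comm (B *ᵥ y)] at hcs
  rw [inv_mulVec_mulVec hB, dotProduct_comm]
  have hq := hB.posSemidef.dotProduct_mulVec_self_nonneg y
  have hA0 := hA.inv.posSemidef.dotProduct_mulVec_self_nonneg (B *ᵥ y)
  nlinarith [mul_le_mul_of_nonneg_right (hAB y) hA0, mul_nonneg hc hA0]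

lemma dotProduct_mulVec_mul_le {P Q : Matrix n n ℝ} (hP : P.PosSemidef) (hQ : Q.PosSemidef)
    {c : ℝ} (hc : 0 ≤ c) (hQP : ∀ y, y ⬝ᵥ Q *ᵥ y ≤ c * (y ⬝ᵥ P *ᵥ y)) (x v : n → ℝ) :
    (x ⬝ᵥ P *ᵥ v) * (v ⬝ᵥ Q *ᵥ x) ≤ c * ((x ⬝ᵥ P *ᵥ x) * (v ⬝ᵥ P *ᵥ v)) := by
  have hx := hP.dotProduct_mulVec_self_nonneg x
  have hv := hP.dotProduct_mulVec_self_nonneg v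
  have hQ_sq : (v ⬝ᵥ Q *ᵥ x) ^ 2 ≤ (c * (v ⬝ᵥ P *ᵥ v)) * (c * (x ⬝ᵥ P *ᵥ x)) :=
    (hQ.dotProduct_mulVec_sq_le v x).trans <| mul_le_mul (hQP v) (hQP x)
      (hQ.dotProduct_mulVec_self_nonneg x) (by positivity)
  refine (le_abs_self _).trans (abs_le_of_sq_le_sq ?_ (by positivity))
  calc ((x ⬝ᵥ P *ᵥ v) * (v ⬝ᵥ Q *ᵥ x)) ^ 2 = (x ⬝ᵥ P *ᵥ v) ^ 2 * (v ⬝ᵥ Q *ᵥ x) ^ 2 := mul_pow ..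
    _ ≤ ((x ⬝ᵥ P *ᵥ x) * (v ⬝ᵥ P *ᵥ v)) * ((c * (v ⬝ᵥ P *ᵥ v)) * (c * (x ⬝ᵥ P *ᵥ x))) :=
      mul_le_mul (hP.dotProduct_mulVec_sq_le x v) hQ_sq (sq_nonneg _) (by positivity)
    _ = (c * ((x ⬝ᵥ P *ᵥ x) * (v ⬝ᵥ P *ᵥ v))) ^ 2 := by ring

lemma dotProduct_outerSum_mulVec_le_card (hψ : ∀ t ∈ s, ψ t ⬝ᵥ ψ t ≤ 1) (x : n → ℝ) :
    x ⬝ᵥ outerSum ψ s *ᵥ x ≤ #s * (x ⬝ᵥ x) := by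
  rw [dotProduct_outerSum_mulVec, ← nsmul_eq_mul, ← sum_const]
  refine sum_le_sum fun t ht => ?_
  have hcs := PosSemidef.one.dotProduct_mulVec_sq_le x (ψ t)
  simp only [one_mulVec] at hcs
  have hx : 0 ≤ x ⬝ᵥ x := by simpa using PosSemidef.one.dotProduct_mulVec_self_nonneg x
  rw [dotProduct_comm (ψ t), ← sq]
  nlinarith [mul_le_mul_of_nonneg_left (hψ t ht) hx]

theorem dotProduct_cross_term_le {Ω : Matrix n n ℝ} (hΩ : Ω.PosDef)
    (hΩ_ge : ∀ y, y ⬝ᵥ y ≤ y ⬝ᵥ Ω *ᵥ y) (hψ : ∀ t ∈ s, ψ t ⬝ᵥ ψ t ≤ 1) (x : n → ℝ) :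
    x ⬝ᵥ ((Ω + outerSum ψ s)⁻¹ * outerSum ψ s * Ω⁻¹) *ᵥ x ≤
      (1 + #s) * (x ⬝ᵥ (Ω + outerSum ψ s)⁻¹ *ᵥ x) *
        ∑ t ∈ s, ψ t ⬝ᵥ (Ω + outerSum ψ s)⁻¹ *ᵥ ψ t := by
  have hS : (Ω + outerSum ψ s).PosDef := hΩ.add_posSemidef posSemidef_outerSum
  -- `outerSum ψ s ≤ #s • 1 ≤ #s • Ω`, hence `Ω + outerSum ψ s ≤ (1 + #s) • Ω`
  have hSΩ : ∀ y, y ⬝ᵥ (Ω + outerSum ψ s) *ᵥ y ≤ (1 + #s) * (y ⬝ᵥ Ω *ᵥ y) := fun y => by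
    rw [add_mulVec, dotProduct_add]
    nlinarith [dotProduct_outerSum_mulVec_le_card hψ y,
      mul_le_mul_of_nonneg_left (hΩ_ge y) (Nat.cast_nonneg (α := ℝ) #s)]
  have hΩS := hS.dotProduct_inv_mulVec_le hΩ (by positivity) hSΩ
  rw [dotProduct_mul_outerSum_mul_mulVec, mul_assoc, mul_sum, mul_sum]
  exact sum_le_sum fun t _ =>
    dotProduct_mulVec_mul_le hS.inv.posSemidef hΩ.inv.posSemidef (by positivity) hΩS x (ψ t)

end

section

variable [DecidableEq n]

def designMatrix (lam : ℝ) (ψ : ι → n → ℝ) (s : Finset ι) : Matrix n n ℝ :=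
  lam • 1 + outerSum ψ s

lemma designMatrix_filter_add (lam : ℝ) (ψ : ι → n → ℝ) (s : Finset ι) (p : ι → Prop)
    [DecidablePred p] :
    designMatrix lam ψ (s.filter p) + outerSum ψ (s.filter (fun t => ¬ p t)) =
      designMatrix lam ψ s := by
  rw [designMatrix, designMatrix, add_assoc, outerSum, outerSum, outerSum,
    sum_filter_add_sum_filter_not]

variable [Fintype n]

lemma dotProduct_designMatrix_mulVec (lam : ℝ) (x : n → ℝ) :
    x ⬝ᵥ designMatrix lam ψ s *ᵥ x = lam * (x ⬝ᵥ x) + x ⬝ᵥ outerSum ψ s *ᵥ x := by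
  rw [designMatrix, add_mulVec, dotProduct_add, smul_mulVec, one_mulVec, dotProduct_smul,
    smul_eq_mul]

lemma posDef_designMatrix {lam : ℝ} (hlam : 0 < lam) : (designMatrix lam ψ s).PosDef :=
  (PosDef.one.smul hlam).add_posSemidef posSemidef_outerSum

lemma dotProduct_self_le_designMatrix {lam : ℝ} (hlam : 1 ≤ lam) (x : n → ℝ) :
    x ⬝ᵥ x ≤ x ⬝ᵥ designMatrix lam ψ s *ᵥ x := by
  have hx : 0 ≤ x ⬝ᵥ x := by simpa using PosSemidef.one.dotProduct_mulVec_self_nonneg x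
  rw [dotProduct_designMatrix_mulVec]
  nlinarith [(posSemidef_outerSum (ψ := ψ) (s := s)).dotProduct_mulVec_self_nonneg x]

lemma dotProduct_inv_designMatrix_antitone {lam : ℝ} (hlam : 0 < lam) {s' : Finset ι}
    (hs : s ⊆ s') (x : n → ℝ) :
    x ⬝ᵥ (designMatrix lam ψ s')⁻¹ *ᵥ x ≤ x ⬝ᵥ (designMatrix lam ψ s)⁻¹ *ᵥ x := by
  simpa using (posDef_designMatrix hlam).dotProduct_inv_mulVec_le (posDef_designMatrix hlam)
    zero_le_one (fun y => by
      simpa [dotProduct_designMatrix_mulVec] using dotProduct_outerSum_mulVec_mono hs y) x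

lemma dotProduct_inv_designMatrix_mulVec_nonneg {lam : ℝ} (hlam : 0 < lam) (x : n → ℝ) :
    0 ≤ x ⬝ᵥ (designMatrix lam ψ s)⁻¹ *ᵥ x :=
  (posDef_designMatrix hlam).inv.posSemidef.dotProduct_mulVec_self_nonneg x

end

end Matrix

lemma EuclideanSpace.ofLp_dotProduct_self {n : Type*} [Fintype n] (x : EuclideanSpace ℝ n) :
    x.ofLp ⬝ᵥ x.ofLp = ‖x‖ ^ 2 := by
  rw [← real_inner_self_eq_norm_sq, EuclideanSpace.inner_eq_star_dotProduct, star_trivial]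

lemma Real.sqrt_mul_le_add_div_two {u v : ℝ} (hu : 0 ≤ u) (hv : 0 ≤ v) :
    √(u * v) ≤ (u + v) / 2 :=
  Real.sqrt_le_iff.mpr ⟨by positivity, by nlinarith [sq_nonneg (u - v)]⟩

/-- `U_j = #(pending τ j)`, and `Λ^k` is the `outerSum` over `pending τ (k - 1)`. -/
def pending (τ : ℕ → ℕ) (j : ℕ) : Finset ℕ := (Icc 1 j).filter (fun t => j < t + τ t)

theorem sqrt_delayed_cross_term_le {n : Type*} [Fintype n] [DecidableEq n] {lam : ℝ}
    (hlam : 1 ≤ lam) {ψ : ℕ → n → ℝ} (τ : ℕ → ℕ) {j : ℕ} (hψ : ∀ t ∈ Icc 1 j, ψ t ⬝ᵥ ψ t ≤ 1)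
    (x : n → ℝ) :
    √(x ⬝ᵥ ((designMatrix lam ψ (Icc 1 j))⁻¹ * outerSum ψ (pending τ j) *
        (designMatrix lam ψ ((Icc 1 j).filter (fun t => t + τ t ≤ j)))⁻¹) *ᵥ x) ≤
      (1 + #(pending τ j)) / 2 * (x ⬝ᵥ (designMatrix lam ψ (Icc 1 j))⁻¹ *ᵥ x) +
        (∑ t ∈ pending τ j, ψ t ⬝ᵥ (designMatrix lam ψ (Icc 1 (t - 1)))⁻¹ *ᵥ ψ t) / 2 := by
  have hlam0 : 0 < lam := by linarith
  set a := x ⬝ᵥ (designMatrix lam ψ (Icc 1 j))⁻¹ *ᵥ x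
  set b := ∑ t ∈ pending τ j, ψ t ⬝ᵥ (designMatrix lam ψ (Icc 1 (t - 1)))⁻¹ *ᵥ ψ t
  have hsplit : designMatrix lam ψ ((Icc 1 j).filter (fun t => t + τ t ≤ j)) +
      outerSum ψ (pending τ j) = designMatrix lam ψ (Icc 1 j) := by
    simpa only [pending, not_le] using
      designMatrix_filter_add lam ψ (Icc 1 j) (fun t => t + τ t ≤ j)
  have hcross := dotProduct_cross_term_le (ψ := ψ) (s := pending τ j)
    (posDef_designMatrix (ψ := ψ) (s := (Icc 1 j).filter (fun t => t + τ t ≤ j)) hlam0)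
    (dotProduct_self_le_designMatrix hlam) (fun t ht => hψ t (filter_subset _ _ ht)) x
  rw [hsplit] at hcross
  have hpast : ∑ t ∈ pending τ j, ψ t ⬝ᵥ (designMatrix lam ψ (Icc 1 j))⁻¹ *ᵥ ψ t ≤ b :=
    sum_le_sum fun t ht => dotProduct_inv_designMatrix_antitone hlam0
      (Icc_subset_Icc_right (by simp only [pending, mem_filter, mem_Icc] at ht; omega)) _
  have ha : 0 ≤ a := dotProduct_inv_designMatrix_mulVec_nonneg hlam0 x
  have hb : 0 ≤ b := sum_nonneg fun t _ => dotProduct_inv_designMatrix_mulVec_nonneg hlam0 _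
  calc _ ≤ √((1 + #(pending τ j)) * a * b) :=
        Real.sqrt_le_sqrt (hcross.trans (mul_le_mul_of_nonneg_left hpast (by positivity)))
    _ ≤ ((1 + #(pending τ j)) * a + b) / 2 := Real.sqrt_mul_le_add_div_two (by positivity) hb
    _ = _ := by ring

lemma sum_sum_pending_le (τ : ℕ → ℕ) {a : ℕ → ℝ} (ha : ∀ t, 0 ≤ a t) (K : ℕ) :
    ∑ k ∈ Icc 1 K, ∑ t ∈ pending τ (k - 1), a t ≤ ∑ t ∈ Icc 1 (K - 1), τ t * a t := by
  -- the feedback of episode `t` is pending exactly in the episodes `k ∈ (t, t + τ t]`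
  rw [sum_comm' (t' := Icc 1 (K - 1)) (s' := fun t => Ioc t (min K (t + τ t))) fun k t => by
    simp only [pending, mem_filter, mem_Icc, mem_Ioc]; omega]
  gcongr with t
  rw [sum_const, Nat.card_Ioc, nsmul_eq_mul]
  exact mul_le_mul_of_nonneg_right
    (by exact_mod_cast (by omega : min K (t + τ t) - t ≤ τ t)) (ha t)

lemma card_pending_le_sup (τ : ℕ → ℕ) {K k : ℕ} (hk : k ∈ Icc 1 K) :
    #(pending τ (k - 1)) ≤ (Icc 1 K).sup fun j => #(pending τ j) := by
  rcases Nat.eq_zero_or_pos (k - 1) with h | h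
  · simp [h, pending]
  · exact le_sup (f := fun j => #(pending τ j))
      (mem_Icc.mpr ⟨h, by simp only [mem_Icc] at hk; omega⟩)

theorem delayed_cross_term_bound_general
    (d K : ℕ) (lam : ℝ) (hlam : 1 ≤ lam)
    (φ : ℕ → EuclideanSpace ℝ (Fin d)) (hφ : ∀ t ∈ Finset.Icc 1 K, ‖φ t‖ ≤ 1)
    (τ : ℕ → ℕ) :
    let Sig : ℕ → Matrix (Fin d) (Fin d) ℝ := fun k =>
      lam • (1 : Matrix (Fin d) (Fin d) ℝ) +
        ∑ t ∈ Finset.Icc 1 (k - 1), vecMulVec (φ t) (φ t)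
    let Om : ℕ → Matrix (Fin d) (Fin d) ℝ := fun k =>
      lam • (1 : Matrix (Fin d) (Fin d) ℝ) +
        ∑ t ∈ Finset.Icc 1 (k - 1),
          (if t + τ t ≤ k - 1 then (1 : ℝ) else 0) • vecMulVec (φ t) (φ t)
    let Lam : ℕ → Matrix (Fin d) (Fin d) ℝ := fun k =>
      ∑ t ∈ Finset.Icc 1 (k - 1),
        (if k - 1 < t + τ t then (1 : ℝ) else 0) • vecMulVec (φ t) (φ t)
    let U : ℕ → ℕ := fun k => ((Finset.Icc 1 k).filter (fun s => k < s + τ s)).card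
    ∑ k ∈ Finset.Icc 1 K,
        Real.sqrt (φ k ⬝ᵥ ((Sig k)⁻¹ * Lam k * (Om k)⁻¹).mulVec (φ k))
      ≤ (1 + (((Finset.Icc 1 K).sup U : ℕ) : ℝ)) / 2 *
          ∑ k ∈ Finset.Icc 1 K, φ k ⬝ᵥ (Sig k)⁻¹.mulVec (φ k)
        + ∑ t ∈ Finset.Icc 1 (K - 1), (τ t : ℝ) * (φ t ⬝ᵥ (Sig t)⁻¹.mulVec (φ t)) := by
  intro Sig Om Lam U
  set ψ : ℕ → Fin d → ℝ := fun t => (φ t).ofLp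
  have hOm k : Om k = designMatrix lam ψ ((Icc 1 (k - 1)).filter (fun t => t + τ t ≤ k - 1)) := by
    rw [designMatrix, outerSum_filter]
  have hLam k : Lam k = outerSum ψ (pending τ (k - 1)) := by rw [pending, outerSum_filter]
  have hψ : ∀ t ∈ Icc 1 K, ψ t ⬝ᵥ ψ t ≤ 1 := fun t ht => by
    rw [EuclideanSpace.ofLp_dotProduct_self]; exact pow_le_one₀ (norm_nonneg _) (hφ t ht)
  have ha t : 0 ≤ ψ t ⬝ᵥ (Sig t)⁻¹ *ᵥ ψ t :=
    dotProduct_inv_designMatrix_mulVec_nonneg (by linarith) _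
  calc ∑ k ∈ Icc 1 K, √(ψ k ⬝ᵥ ((Sig k)⁻¹ * Lam k * (Om k)⁻¹) *ᵥ ψ k)
      ≤ ∑ k ∈ Icc 1 K, ((1 + #(pending τ (k - 1))) / 2 * (ψ k ⬝ᵥ (Sig k)⁻¹ *ᵥ ψ k) +
          (∑ t ∈ pending τ (k - 1), ψ t ⬝ᵥ (Sig t)⁻¹ *ᵥ ψ t) / 2) :=
        sum_le_sum fun k hk => by
          rw [hOm, hLam]
          exact sqrt_delayed_cross_term_le hlam τ
            (fun t ht => hψ t (by simp only [mem_Icc] at ht hk ⊢; omega)) _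
    _ ≤ (1 + (((Icc 1 K).sup U : ℕ) : ℝ)) / 2 * ∑ k ∈ Icc 1 K, ψ k ⬝ᵥ (Sig k)⁻¹ *ᵥ ψ k +
          ∑ k ∈ Icc 1 K, ∑ t ∈ pending τ (k - 1), ψ t ⬝ᵥ (Sig t)⁻¹ *ᵥ ψ t := by
        rw [sum_add_distrib, mul_sum]
        gcongr with k hk
        · exact ha k
        · exact_mod_cast card_pending_le_sup τ hk
        · exact half_le_self (sum_nonneg fun t _ => ha t)
    _ ≤ _ := add_le_add le_rfl (sum_sum_pending_le τ ha K)

/-- Lemma B.3 of the paper: bounding the cross term involving the delayed design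
matrix `Ω^k`, the full design matrix `Σ^k`, and the complement matrix `Λ^k`. -/
theorem delayed_cross_term_bound
    (d K : ℕ) (hd : 0 < d) (hK : 0 < K) (lam : ℝ) (hlam : 1 ≤ lam)
    (φ : ℕ → EuclideanSpace ℝ (Fin d)) (hφ : ∀ t ∈ Finset.Icc 1 K, ‖φ t‖ ≤ 1)
    (τ : ℕ → ℕ) :
    let Sig : ℕ → Matrix (Fin d) (Fin d) ℝ := fun k =>
      lam • (1 : Matrix (Fin d) (Fin d) ℝ) +
        ∑ t ∈ Finset.Icc 1 (k - 1), vecMulVec (φ t) (φ t)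
    let Om : ℕ → Matrix (Fin d) (Fin d) ℝ := fun k =>
      lam • (1 : Matrix (Fin d) (Fin d) ℝ) +
        ∑ t ∈ Finset.Icc 1 (k - 1),
          (if t + τ t ≤ k - 1 then (1 : ℝ) else 0) • vecMulVec (φ t) (φ t)
    let Lam : ℕ → Matrix (Fin d) (Fin d) ℝ := fun k =>
      ∑ t ∈ Finset.Icc 1 (k - 1),
        (if k - 1 < t + τ t then (1 : ℝ) else 0) • vecMulVec (φ t) (φ t)
    let U : ℕ → ℕ := fun k => ((Finset.Icc 1 k).filter (fun s => k < s + τ s)).card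
    ∑ k ∈ Finset.Icc 1 K,
        Real.sqrt (φ k ⬝ᵥ ((Sig k)⁻¹ * Lam k * (Om k)⁻¹).mulVec (φ k))
      ≤ (1 + (((Finset.Icc 1 K).sup U : ℕ) : ℝ)) / 2 *
          ∑ k ∈ Finset.Icc 1 K, φ k ⬝ᵥ (Sig k)⁻¹.mulVec (φ k)
        + ∑ t ∈ Finset.Icc 1 (K - 1), (τ t : ℝ) * (φ t ⬝ᵥ (Sig t)⁻¹.mulVec (φ t)) :=
  delayed_cross_term_bound_general d K lam hlam φ hφ τ
end

section
/- Let d and k be positive integers, let λ > 0 be a real number, let φ₁, …, φ_{k−1} ∈ ℝ^d, and define the d×d matrix Ω = λI + Σ_{τ=1}^{k−1} φ_τ φ_τᵀ. Then Σ_{τ=1}^{k−1} φ_τᵀ Ω⁻¹ φ_τ ≤ d. -/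
open Matrix Finset

/-!
Since `x ⬝ᵥ M *ᵥ x = tr (M * x xᵀ)`, the sum equals `tr (Ω⁻¹ A)` with `A = Σ φ_τ φ_τᵀ = Ω - λ I`,
i.e. `tr (I - λ Ω⁻¹) = d - λ tr Ω⁻¹`, and `tr Ω⁻¹ ≥ 0` because `Ω⁻¹` is positive definite.
-/

namespace Matrix

variable {n : Type*} [Fintype n]

lemma dotProduct_mulVec_eq_trace_mul_vecMulVec {R : Type*} [CommSemiring R]
    (M : Matrix n n R) (x : n → R) : x ⬝ᵥ M *ᵥ x = (M * vecMulVec x x).trace := by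
  rw [mul_vecMulVec, trace_vecMulVec, dotProduct_comm]

lemma posSemidef_sum_vecMulVec_self {ι : Type*} (s : Finset ι) (φ : ι → n → ℝ) :
    (∑ i ∈ s, vecMulVec (φ i) (φ i)).PosSemidef :=
  posSemidef_sum s fun i _ => by simpa using posSemidef_vecMulVec_self_star (φ i)

variable [DecidableEq n]

lemma trace_inv_smul_one_add_mul_le_card {A : Matrix n n ℝ} (hA : A.PosSemidef)
    {lam : ℝ} (hlam : 0 < lam) : ((lam • 1 + A)⁻¹ * A).trace ≤ Fintype.card n := by
  set Ω := lam • (1 : Matrix n n ℝ) + A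
  have hΩ : Ω.PosDef := (PosDef.one.smul hlam).add_posSemidef hA
  have hΩ_inv_mul : Ω⁻¹ * Ω = 1 := nonsing_inv_mul Ω ((isUnit_iff_isUnit_det Ω).mp hΩ.isUnit)
  have hA_eq : A = Ω - lam • 1 := by simp [Ω]
  have htrace : (Ω⁻¹ * A).trace = Fintype.card n - lam * Ω⁻¹.trace := by
    rw [hA_eq, Matrix.mul_sub, trace_sub, hΩ_inv_mul, trace_one, Matrix.mul_smul, mul_one,
      trace_smul, smul_eq_mul]
  have := mul_nonneg hlam.le hΩ.inv.posSemidef.trace_nonneg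
  linarith

end Matrix

theorem sum_quadratic_form_inv_le_dim_general
    (d k : ℕ) (lam : ℝ) (hlam : 0 < lam)
    (φ : ℕ → (Fin d → ℝ)) :
    let Ω : Matrix (Fin d) (Fin d) ℝ :=
      lam • (1 : Matrix (Fin d) (Fin d) ℝ) +
        ∑ τ ∈ Finset.Icc 1 (k - 1), vecMulVec (φ τ) (φ τ)
    ∑ τ ∈ Finset.Icc 1 (k - 1), φ τ ⬝ᵥ Ω⁻¹.mulVec (φ τ) ≤ (d : ℝ) := by
  intro Ω
  calc ∑ τ ∈ Icc 1 (k - 1), φ τ ⬝ᵥ Ω⁻¹ *ᵥ φ τ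
      = (Ω⁻¹ * ∑ τ ∈ Icc 1 (k - 1), vecMulVec (φ τ) (φ τ)).trace := by
        simp only [dotProduct_mulVec_eq_trace_mul_vecMulVec, Finset.mul_sum, trace_sum]
    _ ≤ Fintype.card (Fin d) :=
        trace_inv_smul_one_add_mul_le_card (posSemidef_sum_vecMulVec_self _ φ) hlam
    _ = d := by rw [Fintype.card_fin]

/-- Lemma D.2 / D.3-style bound: with `Ω = λI + Σ_{τ=1}^{k-1} φ_τ φ_τᵀ`,
the sum of quadratic forms `Σ_{τ=1}^{k-1} φ_τᵀ Ω⁻¹ φ_τ` is at most `d`. -/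
theorem sum_quadratic_form_inv_le_dim
    (d k : ℕ) (hd : 0 < d) (hk : 0 < k) (lam : ℝ) (hlam : 0 < lam)
    (φ : ℕ → (Fin d → ℝ)) :
    let Ω : Matrix (Fin d) (Fin d) ℝ :=
      lam • (1 : Matrix (Fin d) (Fin d) ℝ) +
        ∑ τ ∈ Finset.Icc 1 (k - 1), vecMulVec (φ τ) (φ τ)
    ∑ τ ∈ Finset.Icc 1 (k - 1), φ τ ⬝ᵥ Ω⁻¹.mulVec (φ τ) ≤ (d : ℝ) :=
  sum_quadratic_form_inv_le_dim_general d k lam hlam φ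
end

section
/- Let d, k be positive integers, let λ > 0 and H > 0 be real numbers, let φ₁, …, φ_{k−1} ∈ ℝ^d, and let y₁, …, y_{k−1} be real numbers with |y_τ| ≤ 2H for all τ. Define Ω = λI + Σ_{τ=1}^{k−1} φ_τ φ_τᵀ and the ridge-regression estimate ŵ = Ω⁻¹ Σ_{τ=1}^{k−1} φ_τ y_τ. Then ‖ŵ‖ ≤ 2H √(dk/λ), where ‖·‖ is the Euclidean norm on ℝ^d. -/
/-!
Write `b = ∑ y_τ φ_τ`, so that `Ω w = b`, and `Q = ∑ (φ_τ ⬝ w)²`. Then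
`wᵀΩw = λ‖w‖² + Q`, while also `wᵀΩw = w ⬝ b = ∑ y_τ (φ_τ ⬝ w) ≤ 2H √(#s · Q)` by Cauchy–Schwarz.
Since `Q ≤ wᵀΩw`, this forces `wᵀΩw ≤ 4H² #s`, hence `λ‖w‖² ≤ 4H² (k - 1) ≤ 4H² d k`.
-/

open Matrix Finset

section Ridge

variable {n α : Type*} [Fintype n] [DecidableEq n]

def ridgeGram (lam : ℝ) (s : Finset α) (φ : α → n → ℝ) : Matrix n n ℝ :=
  lam • 1 + ∑ τ ∈ s, vecMulVec (φ τ) (φ τ)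

lemma dotProduct_ridgeGram_mulVec (lam : ℝ) (s : Finset α) (φ : α → n → ℝ) (v : n → ℝ) :
    v ⬝ᵥ ridgeGram lam s φ *ᵥ v = lam * (v ⬝ᵥ v) + ∑ τ ∈ s, (φ τ ⬝ᵥ v) ^ 2 := by
  rw [ridgeGram, add_mulVec, dotProduct_add, smul_mulVec, one_mulVec, dotProduct_smul, smul_eq_mul,
    sum_mulVec, dotProduct_sum]
  simp [vecMulVec_mulVec, dotProduct_comm v, sq]

lemma posDef_ridgeGram {lam : ℝ} (hlam : 0 < lam) (s : Finset α) (φ : α → n → ℝ) :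
    (ridgeGram lam s φ).PosDef := by
  have hId : (lam • (1 : Matrix n n ℝ)).PosDef := by
    rw [smul_one_eq_diagonal]
    exact PosDef.diagonal fun _ => hlam
  exact hId.add_posSemidef (posSemidef_sum s fun τ _ => posSemidef_vecMulVec_self_star (φ τ))

lemma mul_dotProduct_self_le_of_ridgeGram_mulVec {lam c : ℝ} (hlam : 0 ≤ lam) {s : Finset α}
    {φ : α → n → ℝ} {y : α → ℝ} (hy : ∀ τ ∈ s, |y τ| ≤ c) {w : n → ℝ}
    (hw : ridgeGram lam s φ *ᵥ w = ∑ τ ∈ s, y τ • φ τ) :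
    lam * (w ⬝ᵥ w) ≤ c ^ 2 * #s := by
  set Q := ∑ τ ∈ s, (φ τ ⬝ᵥ w) ^ 2
  have hnormal : lam * (w ⬝ᵥ w) + Q = ∑ τ ∈ s, y τ * (φ τ ⬝ᵥ w) := by
    rw [← dotProduct_ridgeGram_mulVec, hw, dotProduct_sum]
    simp [dotProduct_comm w]
  have hy_sq : ∑ τ ∈ s, y τ ^ 2 ≤ c ^ 2 * #s := by
    rw [mul_comm, ← nsmul_eq_mul]
    exact sum_le_card_nsmul _ _ _ fun τ hτ => sq_le_sq' (abs_le.1 (hy τ hτ)).1 (abs_le.1 (hy τ hτ)).2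
  have hcs : (lam * (w ⬝ᵥ w) + Q) ^ 2 ≤ c ^ 2 * #s * Q := by
    rw [hnormal]
    exact (sum_mul_sq_le_sq_mul_sq s y _).trans
      (mul_le_mul_of_nonneg_right hy_sq (sum_nonneg fun _ _ => sq_nonneg _))
  have hw_nonneg : 0 ≤ lam * (w ⬝ᵥ w) := mul_nonneg hlam (dotProduct_self_star_nonneg w)
  have hQ : 0 ≤ Q := sum_nonneg fun _ _ => sq_nonneg _
  have hK : 0 ≤ c ^ 2 * #s := by positivity
  have hX : lam * (w ⬝ᵥ w) + Q ≤ c ^ 2 * #s := by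
    nlinarith [mul_le_mul_of_nonneg_left (le_add_of_nonneg_left hw_nonneg : Q ≤ _) hK]
  linarith

lemma norm_ridge_estimate_le {lam c : ℝ} (hlam : 0 < lam) (hc : 0 ≤ c) (s : Finset α)
    (φ : α → n → ℝ) {y : α → ℝ} (hy : ∀ τ ∈ s, |y τ| ≤ c) :
    ‖WithLp.toLp 2 ((ridgeGram lam s φ)⁻¹ *ᵥ ∑ τ ∈ s, y τ • φ τ)‖ ≤ c * √(#s / lam) := by
  set w := (ridgeGram lam s φ)⁻¹ *ᵥ ∑ τ ∈ s, y τ • φ τ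
  have hw : ridgeGram lam s φ *ᵥ w = ∑ τ ∈ s, y τ • φ τ := by
    rw [mulVec_mulVec, mul_nonsing_inv _ (posDef_ridgeGram hlam s φ).det_pos.ne'.isUnit, one_mulVec]
  have hnorm_sq : ‖WithLp.toLp 2 w‖ ^ 2 ≤ (c * √(#s / lam)) ^ 2 := by
    rw [EuclideanSpace.real_norm_sq_eq, mul_pow, Real.sq_sqrt (by positivity), ← mul_div_assoc,
      le_div_iff₀ hlam, mul_comm]
    simpa only [dotProduct, ← sq] using mul_dotProduct_self_le_of_ridgeGram_mulVec hlam.le hy hw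
  exact (pow_le_pow_iff_left₀ (norm_nonneg _) (by positivity) two_ne_zero).1 hnorm_sq

end Ridge

theorem ridge_regression_weight_norm_bound_general
    (d k : ℕ) (hd : 0 < d) (lam H : ℝ) (hlam : 0 < lam) (hH : 0 < H)
    (φ : ℕ → EuclideanSpace ℝ (Fin d)) (y : ℕ → ℝ)
    (hy : ∀ τ ∈ Finset.Icc 1 (k - 1), |y τ| ≤ 2 * H) :
    let Ω : Matrix (Fin d) (Fin d) ℝ :=
      lam • (1 : Matrix (Fin d) (Fin d) ℝ) +
        ∑ τ ∈ Finset.Icc 1 (k - 1), vecMulVec (φ τ) (φ τ)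
    let w : EuclideanSpace ℝ (Fin d) :=
      WithLp.toLp 2 (Ω⁻¹.mulVec (∑ τ ∈ Finset.Icc 1 (k - 1), y τ • φ τ))
    ‖w‖ ≤ 2 * H * Real.sqrt (d * k / lam) := by
  intro Ω w
  have hcard : (#(Icc 1 (k - 1)) : ℝ) ≤ d * k := by
    rw [Nat.card_Icc]
    exact_mod_cast (Nat.sub_le _ _).trans (Nat.le_mul_of_pos_left k hd)
  calc ‖w‖ ≤ 2 * H * √(#(Icc 1 (k - 1)) / lam) := by
        simpa only [w, Ω, ridgeGram, WithLp.ofLp_sum, WithLp.ofLp_smul] using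
          norm_ridge_estimate_le hlam (by positivity) (Icc 1 (k - 1)) (fun τ => φ τ) hy
    _ ≤ 2 * H * √(d * k / lam) := by gcongr

/-- Lemma D.4 of the paper: the ridge-regression estimate
`ŵ = Ω⁻¹ Σ φ_τ y_τ` with `|y_τ| ≤ 2H` satisfies `‖ŵ‖ ≤ 2H √(dk/λ)`. -/
theorem ridge_regression_weight_norm_bound
    (d k : ℕ) (hd : 0 < d) (hk : 0 < k) (lam H : ℝ) (hlam : 0 < lam) (hH : 0 < H)
    (φ : ℕ → EuclideanSpace ℝ (Fin d)) (y : ℕ → ℝ)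
    (hy : ∀ τ ∈ Finset.Icc 1 (k - 1), |y τ| ≤ 2 * H) :
    let Ω : Matrix (Fin d) (Fin d) ℝ :=
      lam • (1 : Matrix (Fin d) (Fin d) ℝ) +
        ∑ τ ∈ Finset.Icc 1 (k - 1), vecMulVec (φ τ) (φ τ)
    let w : EuclideanSpace ℝ (Fin d) :=
      WithLp.toLp 2 (Ω⁻¹.mulVec (∑ τ ∈ Finset.Icc 1 (k - 1), y τ • φ τ))
    ‖w‖ ≤ 2 * H * Real.sqrt (d * k / lam) :=
  ridge_regression_weight_norm_bound_general d k hd lam H hlam hH φ y hy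
end

section
/- Let Ω be a d×d real symmetric positive definite matrix with largest eigenvalue λ_max and smallest eigenvalue λ_min, and let κ = λ_max/λ_min be its condition number. Set η = 1/(4λ_max) and A = I − 2ηΩ. Let N be a positive integer and γ > 0, and define Θ = γ (I − A^{2N}) Ω⁻¹ (I + A)⁻¹. Then γΩ⁻¹ − Θ is positive definite and Θ − (γ/2)(1 − (1 − 1/(2κ))^{2N}) Ω⁻¹ is positive definite; that is, (γ/2)(1 − (1 − 1/(2κ))^{2N}) Ω⁻¹ ≺ Θ ≺ γΩ⁻¹ in the Loewner order. -/
/-!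
Diagonalise `Ω = U diag(λ) Uᵀ`. Every matrix in the statement is then `U diag(f(λᵢ)) Uᵀ` for a
scalar function `f`, so each Loewner inequality reduces to a scalar inequality at each eigenvalue.
At an eigenvalue `t` the contraction factor `a = 1 - t/(2λ_max)` lies in `(0, 1 - 1/(2κ)]`,
and the eigenvalue `(γ/t)(1 - a^{2N})/(1 + a)` of `Θ` lies strictly between
`(γ/t)(1 - (1 - 1/(2κ))^{2N})/2` and `γ/t` because `1 < 1 + a < 2`.
-/

open Matrix

namespace Matrix

variable {n 𝕜 : Type*} [Fintype n] [DecidableEq n] [Field 𝕜] [StarRing 𝕜]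

noncomputable def unitaryConjDiagonal (U : unitary (Matrix n n 𝕜)) : (n → 𝕜) →ₐ[𝕜] Matrix n n 𝕜 :=
  (Unitary.conjStarAlgAut 𝕜 _ U).toAlgEquiv.toAlgHom.comp (diagonalAlgHom 𝕜)

variable (U : unitary (Matrix n n 𝕜)) {v w : n → 𝕜}

theorem inv_unitaryConjDiagonal (hv : ∀ i, v i ≠ 0) :
    (unitaryConjDiagonal U v)⁻¹ = unitaryConjDiagonal U v⁻¹ :=
  inv_eq_right_inv <| by
    rw [← map_mul, show v * v⁻¹ = 1 from funext fun i => mul_inv_cancel₀ (hv i), map_one]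

variable [PartialOrder 𝕜] [StarOrderedRing 𝕜]

theorem posDef_unitaryConjDiagonal (hv : ∀ i, 0 < v i) : (unitaryConjDiagonal U v).PosDef :=
  (Unitary.isUnit_coe).posDef_star_right_conjugate_iff.mpr (PosDef.diagonal hv)

theorem posDef_unitaryConjDiagonal_sub (h : ∀ i, v i < w i) :
    (unitaryConjDiagonal U w - unitaryConjDiagonal U v).PosDef := by
  rw [← map_sub]
  exact posDef_unitaryConjDiagonal U fun i => sub_pos.mpr (h i)

end Matrix

theorem Matrix.IsHermitian.eq_unitaryConjDiagonal_eigenvalues {n : Type*} [Fintype n]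
    [DecidableEq n] {A : Matrix n n ℝ} (hA : A.IsHermitian) :
    A = unitaryConjDiagonal hA.eigenvectorUnitary hA.eigenvalues :=
  hA.spectral_theorem

theorem one_sub_pow_div_one_add_lt_one {a : ℝ} (ha : 0 < a) (n : ℕ) :
    (1 - a ^ n) / (1 + a) < 1 := by
  rw [div_lt_one (by positivity)]
  linarith [pow_nonneg ha.le n]

theorem one_sub_pow_div_two_lt_one_sub_pow_div_one_add {a b : ℝ} (ha : 0 ≤ a) (hab : a ≤ b)
    (hb : b < 1) {n : ℕ} (hn : n ≠ 0) :
    (1 - b ^ n) / 2 < (1 - a ^ n) / (1 + a) := by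
  have hbn : b ^ n < 1 := pow_lt_one₀ (ha.trans hab) hb hn
  calc (1 - b ^ n) / 2 < (1 - b ^ n) / (1 + a) := by gcongr; linarith
    _ ≤ (1 - a ^ n) / (1 + a) := by gcongr

theorem langevin_contraction_bounds {lmin lmax t : ℝ} (hmin : 0 < lmin) (hlo : lmin ≤ t)
    (hhi : t ≤ lmax) :
    0 < 1 - 2 * (1 / (4 * lmax)) * t ∧
      1 - 2 * (1 / (4 * lmax)) * t ≤ 1 - 1 / (2 * (lmax / lmin)) ∧
      1 - 1 / (2 * (lmax / lmin)) < 1 := by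
  have hmax : 0 < lmax := hmin.trans_le (hlo.trans hhi)
  have hstep : 2 * (1 / (4 * lmax)) * t = t / (2 * lmax) := by field_simp; ring
  have hκ : 1 / (2 * (lmax / lmin)) = lmin / (2 * lmax) := by field_simp
  rw [hstep, hκ]
  refine ⟨?_, ?_, ?_⟩
  · exact sub_pos.mpr ((div_lt_one (by positivity)).mpr (by linarith))
  · linarith [div_le_div_of_nonneg_right hlo (by positivity : (0 : ℝ) ≤ 2 * lmax)]
  · linarith [(by positivity : 0 < lmin / (2 * lmax))]

/-- The eigenvalue of `Θ` on an eigenvector of `Ω` with eigenvalue `t`, where `a = 1 - 2ηt`. -/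
noncomputable def langevinVariance (γ a t : ℝ) (n : ℕ) : ℝ :=
  γ * ((1 - a ^ n) * t⁻¹ * (1 + a)⁻¹)

theorem langevinVariance_lt {γ a t : ℝ} (hγ : 0 < γ) (ha : 0 < a) (ht : 0 < t) (n : ℕ) :
    langevinVariance γ a t n < γ * t⁻¹ :=
  calc langevinVariance γ a t n = γ * t⁻¹ * ((1 - a ^ n) / (1 + a)) := by
        rw [langevinVariance]; ring
    _ < γ * t⁻¹ := mul_lt_of_lt_one_right (by positivity) (one_sub_pow_div_one_add_lt_one ha n)

theorem lt_langevinVariance {γ a b t : ℝ} (hγ : 0 < γ) (ha : 0 ≤ a) (hab : a ≤ b) (hb : b < 1)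
    (ht : 0 < t) {n : ℕ} (hn : n ≠ 0) :
    γ / 2 * (1 - b ^ n) * t⁻¹ < langevinVariance γ a t n :=
  calc γ / 2 * (1 - b ^ n) * t⁻¹ = γ * t⁻¹ * ((1 - b ^ n) / 2) := by ring
    _ < γ * t⁻¹ * ((1 - a ^ n) / (1 + a)) :=
        mul_lt_mul_of_pos_left (one_sub_pow_div_two_lt_one_sub_pow_div_one_add ha hab hb hn)
          (by positivity)
    _ = langevinVariance γ a t n := by rw [langevinVariance]; ring

/-- Second part of Lemma C.1 of the paper: the Langevin Monte Carlo covariance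
`Θ = γ(I - A^{2N}) Ω⁻¹ (I + A)⁻¹` with `A = I - 2ηΩ`, `η = 1/(4λ_max)`, satisfies
`(γ/2)(1 - (1 - 1/(2κ))^{2N}) Ω⁻¹ ≺ Θ ≺ γ Ω⁻¹` in the Loewner order. -/
theorem langevin_covariance_loewner_bounds
    (d : ℕ) (hd : 0 < d) (Ω : Matrix (Fin d) (Fin d) ℝ)
    (hherm : Ω.IsHermitian) (hΩ : Ω.PosDef)
    (N : ℕ) (hN : 0 < N) (γ : ℝ) (hγ : 0 < γ) :
    let hne : (Finset.univ : Finset (Fin d)).Nonempty := ⟨⟨0, hd⟩, Finset.mem_univ _⟩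
    let lmax := Finset.univ.sup' hne hherm.eigenvalues
    let lmin := Finset.univ.inf' hne hherm.eigenvalues
    let κ := lmax / lmin
    let η := 1 / (4 * lmax)
    let A := (1 : Matrix (Fin d) (Fin d) ℝ) - (2 * η) • Ω
    let Θ := γ • (((1 : Matrix (Fin d) (Fin d) ℝ) - A ^ (2 * N)) * Ω⁻¹ *
      ((1 : Matrix (Fin d) (Fin d) ℝ) + A)⁻¹)
    (γ • Ω⁻¹ - Θ).PosDef ∧
      (Θ - ((γ / 2) * (1 - (1 - 1 / (2 * κ)) ^ (2 * N))) • Ω⁻¹).PosDef := by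
  intro hne lmax lmin κ η A Θ
  set φ := unitaryConjDiagonal hherm.eigenvectorUnitary
  set v := hherm.eigenvalues
  set a : Fin d → ℝ := 1 - (2 * η) • v
  have hv : ∀ i, 0 < v i := hΩ.eigenvalues_pos
  have hmin : 0 < lmin := (Finset.lt_inf'_iff hne).mpr fun i _ => hv i
  have ha : ∀ i, 0 < a i ∧ a i ≤ 1 - 1 / (2 * κ) ∧ 1 - 1 / (2 * κ) < 1 := fun i =>
    langevin_contraction_bounds hmin (Finset.inf'_le _ (Finset.mem_univ i))
      (Finset.le_sup' _ (Finset.mem_univ i))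
  have hΩφ : Ω = φ v := hherm.eq_unitaryConjDiagonal_eigenvalues
  have hΩinv : Ω⁻¹ = φ v⁻¹ := hΩφ ▸ inv_unitaryConjDiagonal _ fun i => (hv i).ne'
  have hΘ : Θ = φ fun i => langevinVariance γ (a i) (v i) (2 * N) := by
    have hA : A = φ a := by simp only [A, a, hΩφ, map_sub, map_one, map_smul]
    have h1A : (1 + φ a)⁻¹ = φ (1 + a)⁻¹ := by
      rw [← map_one φ, ← map_add]
      exact inv_unitaryConjDiagonal _ fun i => (add_pos one_pos (ha i).1).ne'
    have hθ : (fun i => langevinVariance γ (a i) (v i) (2 * N))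
        = γ • ((1 - a ^ (2 * N)) * v⁻¹ * (1 + a)⁻¹) := rfl
    simp only [Θ, hθ, map_smul, map_mul, map_sub, map_pow, map_one, hA, hΩinv, h1A]
  rw [hΘ, hΩinv, ← map_smul, ← map_smul]
  exact ⟨posDef_unitaryConjDiagonal_sub _ fun i => langevinVariance_lt hγ (ha i).1 (hv i) _,
    posDef_unitaryConjDiagonal_sub _ fun i =>
      lt_langevinVariance hγ (ha i).1.le (ha i).2.1 (ha i).2.2 (hv i) (by positivity)⟩
end

section
/- Let d be a positive integer, λ > 0 a real number, and M a d×d real symmetric positive semidefinite matrix; set Ω = λI + M. Let U be a nonnegative integer and ψ₁, …, ψ_U ∈ ℝ^d with ‖ψ_i‖ ≤ 1 for all i; set Λ = Σ_{i=1}^{U} ψ_i ψ_iᵀ and Σ = Ω + Λ. Then Ω and Σ are invertible and (1 + U/λ)·Σ⁻¹ − Ω⁻¹ is positive semidefinite; that is, (1 + U/λ)Σ⁻¹ ⪰ Ω⁻¹ in the Loewner order. -/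
/-!
Since `‖ψᵢ‖ ≤ 1`, each `ψᵢψᵢᵀ ⪯ I`, so `Λ ⪯ U I ⪯ (U/λ) Ω`, i.e. `Σ ⪯ (1 + U/λ) Ω`; inverting
this Loewner inequality between positive definite matrices gives the claim. Antitonicity of
inversion comes from the variational formula `xᵀA⁻¹x = max_y (2 yᵀx - yᵀAy)`, which needs no
matrix square roots.
-/

open Matrix Finset
open scoped MatrixOrder

namespace Matrix

variable {n : Type*} [Fintype n]

lemma posSemidef_vecMulVec_self (v : n → ℝ) : (vecMulVec v v).PosSemidef := by
  simpa using posSemidef_vecMulVec_self_star v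

variable [DecidableEq n]

-- The gap is `(y - A⁻¹x)ᵀ A (y - A⁻¹x) ≥ 0`, so equality holds at `y = A⁻¹x`.
lemma PosDef.two_mul_dotProduct_sub_le_dotProduct_inv_mulVec {A : Matrix n n ℝ}
    (hA : A.PosDef) (x y : n → ℝ) :
    2 * (y ⬝ᵥ x) - y ⬝ᵥ A *ᵥ y ≤ x ⬝ᵥ A⁻¹ *ᵥ x := by
  set z := A⁻¹ *ᵥ x
  have hAz : A *ᵥ z = x := by
    simp [z, mulVec_mulVec, mul_nonsing_inv A ((isUnit_iff_isUnit_det A).mp hA.isUnit)]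
  have hAT : Aᵀ = A := by simpa using hA.isHermitian.eq
  have hzy : z ⬝ᵥ A *ᵥ y = y ⬝ᵥ x := by
    rw [dotProduct_mulVec, ← mulVec_transpose, hAT, hAz, dotProduct_comm]
  have hsq := hA.posSemidef.dotProduct_mulVec_nonneg (y - z)
  simp only [star_trivial, mulVec_sub, sub_dotProduct, dotProduct_sub, hAz, hzy] at hsq
  rw [dotProduct_comm z x] at hsq
  linarith

theorem PosDef.inv_le_inv_of_le {A B : Matrix n n ℝ} (hA : A.PosDef) (hAB : A ≤ B) :
    B⁻¹ ≤ A⁻¹ := by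
  have hB : B.PosDef := by simpa using hA.add_posSemidef (le_iff.mp hAB)
  refine le_iff.mpr (posSemidef_iff_dotProduct_mulVec.mpr
    ⟨hA.isHermitian.inv.sub hB.isHermitian.inv, fun x => ?_⟩)
  set y := B⁻¹ *ᵥ x
  have hBy : B *ᵥ y = x := by
    simp [y, mulVec_mulVec, mul_nonsing_inv B ((isUnit_iff_isUnit_det B).mp hB.isUnit)]
  have hxB : x ⬝ᵥ B⁻¹ *ᵥ x = 2 * (y ⬝ᵥ x) - y ⬝ᵥ B *ᵥ y := by
    rw [hBy, dotProduct_comm x]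
    ring
  have hyAB : y ⬝ᵥ A *ᵥ y ≤ y ⬝ᵥ B *ᵥ y := by
    simpa [sub_mulVec] using (le_iff.mp hAB).dotProduct_mulVec_nonneg y
  have hxA := hA.two_mul_dotProduct_sub_le_dotProduct_inv_mulVec x y
  rw [star_trivial, sub_mulVec, dotProduct_sub]
  linarith

theorem PosDef.inv_le_smul_inv_of_le_smul {A B : Matrix n n ℝ} {c : ℝ} (hB : B.PosDef)
    (hc : 0 < c) (hBA : B ≤ c • A) : A⁻¹ ≤ c • B⁻¹ := by
  have hA : IsUnit A.det := by
    have hcA : (c • A).PosDef := by simpa using hB.add_posSemidef (le_iff.mp hBA)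
    simpa [det_smul, hc.ne'] using (isUnit_iff_isUnit_det _).mp hcA.isUnit
  have hinv : (c • A)⁻¹ = c⁻¹ • A⁻¹ := inv_smul' A (Units.mk0 c hc.ne') hA
  have hanti := le_iff.mp (hB.inv_le_inv_of_le hBA)
  rw [hinv] at hanti
  refine le_iff.mpr ?_
  convert hanti.smul hc.le using 1
  rw [smul_sub, smul_smul, mul_inv_cancel₀ hc.ne', one_smul]

lemma vecMulVec_self_le_norm_sq_smul_one (v : EuclideanSpace ℝ n) :
    vecMulVec v v ≤ (‖v‖ ^ 2) • (1 : Matrix n n ℝ) := by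
  refine le_iff.mpr (posSemidef_iff_dotProduct_mulVec.mpr ⟨?_, fun x => ?_⟩)
  · exact (isHermitian_one.smul (.all _)).sub (posSemidef_vecMulVec_self v.ofLp).isHermitian
  have hquad : x ⬝ᵥ vecMulVec v v *ᵥ x = inner ℝ v (WithLp.toLp 2 x) ^ 2 := by
    rw [vecMulVec_mulVec, EuclideanSpace.inner_eq_star_dotProduct, star_trivial]
    simp [dotProduct_comm, sq]
  have hnorm : x ⬝ᵥ x = ‖WithLp.toLp 2 x‖ ^ 2 := by
    rw [← real_inner_self_eq_norm_sq, EuclideanSpace.inner_eq_star_dotProduct, star_trivial]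
  have hCS := real_inner_mul_inner_self_le v (WithLp.toLp 2 x)
  rw [real_inner_self_eq_norm_sq, real_inner_self_eq_norm_sq] at hCS
  rw [star_trivial, sub_mulVec, dotProduct_sub, hquad, smul_mulVec, one_mulVec, dotProduct_smul,
    smul_eq_mul, hnorm, sq (inner ℝ _ _)]
  linarith

lemma sum_vecMulVec_self_le_card_smul_one {ι : Type*} [Fintype ι]
    (ψ : ι → EuclideanSpace ℝ n) (hψ : ∀ i, ‖ψ i‖ ≤ 1) :
    ∑ i, vecMulVec (ψ i) (ψ i) ≤ (Fintype.card ι : ℝ) • (1 : Matrix n n ℝ) := by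
  have hle (i : ι) : vecMulVec (ψ i) (ψ i) ≤ (1 : ℝ) • (1 : Matrix n n ℝ) := by
    refine (vecMulVec_self_le_norm_sq_smul_one (ψ i)).trans (le_iff.mpr ?_)
    rw [← sub_smul]
    exact PosSemidef.one.smul (by nlinarith [norm_nonneg (ψ i), hψ i])
  refine (sum_le_sum fun i _ => hle i).trans_eq ?_
  rw [sum_const, card_univ, one_smul, Nat.cast_smul_eq_nsmul]

end Matrix

theorem delayed_vs_full_design_inverse_loewner_general
    (d : ℕ) (lam : ℝ) (hlam : 0 < lam)
    (M : Matrix (Fin d) (Fin d) ℝ) (hM : M.PosSemidef)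
    (U : ℕ) (ψ : Fin U → EuclideanSpace ℝ (Fin d)) (hψ : ∀ i, ‖ψ i‖ ≤ 1) :
    let Ω : Matrix (Fin d) (Fin d) ℝ := lam • (1 : Matrix (Fin d) (Fin d) ℝ) + M
    let Lam : Matrix (Fin d) (Fin d) ℝ := ∑ i, vecMulVec (ψ i) (ψ i)
    let Sig : Matrix (Fin d) (Fin d) ℝ := Ω + Lam
    IsUnit Ω ∧ IsUnit Sig ∧
      ((1 + (U : ℝ) / lam) • Sig⁻¹ - Ω⁻¹).PosSemidef := by
  intro Ω Lam Sig
  have hΩ : Ω.PosDef := (PosDef.one.smul hlam).add_posSemidef hM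
  have hLam_nonneg : 0 ≤ Lam :=
    sum_nonneg fun i _ => nonneg_iff_posSemidef.mpr (posSemidef_vecMulVec_self (ψ i).ofLp)
  have hLam_le : Lam ≤ (U : ℝ) • 1 := by
    simpa using sum_vecMulVec_self_le_card_smul_one ψ hψ
  have hSig : Sig.PosDef := hΩ.add_posSemidef (nonneg_iff_posSemidef.mp hLam_nonneg)
  have hSig_le : Sig ≤ (1 + (U : ℝ) / lam) • Ω := by
    have hdiff :
        (1 + (U : ℝ) / lam) • Ω - Sig = ((U : ℝ) • 1 - Lam) + ((U : ℝ) / lam) • M := by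
      simp only [Ω, Sig]
      match_scalars <;> field_simp <;> ring
    rw [le_iff, hdiff]
    exact (le_iff.mp hLam_le).add (hM.smul (by positivity))
  exact ⟨hΩ.isUnit, hSig.isUnit,
    le_iff.mp (hSig.inv_le_smul_inv_of_le_smul (by positivity) hSig_le)⟩

/-- Lemma D.16 of the paper: with `Ω = λI + M` (M PSD), `Λ = Σ ψᵢψᵢᵀ` built from
`U` unit-norm vectors, and `Σ = Ω + Λ`, both `Ω` and `Σ` are invertible and
`(1 + U/λ) Σ⁻¹ ⪰ Ω⁻¹` in the Loewner order. -/
theorem delayed_vs_full_design_inverse_loewner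
    (d : ℕ) (hd : 0 < d) (lam : ℝ) (hlam : 0 < lam)
    (M : Matrix (Fin d) (Fin d) ℝ) (hM : M.PosSemidef)
    (U : ℕ) (ψ : Fin U → EuclideanSpace ℝ (Fin d)) (hψ : ∀ i, ‖ψ i‖ ≤ 1) :
    let Ω : Matrix (Fin d) (Fin d) ℝ := lam • (1 : Matrix (Fin d) (Fin d) ℝ) + M
    let Lam : Matrix (Fin d) (Fin d) ℝ := ∑ i, vecMulVec (ψ i) (ψ i)
    let Sig : Matrix (Fin d) (Fin d) ℝ := Ω + Lam
    IsUnit Ω ∧ IsUnit Sig ∧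
      ((1 + (U : ℝ) / lam) • Sig⁻¹ - Ω⁻¹).PosSemidef :=
  delayed_vs_full_design_inverse_loewner_general d lam hlam M hM U ψ hψ
end
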